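/- arXiv:1406.7503 — 2 statements merged into one kernel-verified Lean document; each statement's English description precedes it below -/
import Mathlib

section
/- Let 0 < p < 1, let α_1,…,α_N be positive real numbers, let u_1,…,u_N (N ≥ n+1) be unit vectors in ℝ^n not concentrated on a closed hemisphere, and let P ∈ P(u_1,…,u_N). Then there exists a unique point ξ_p(P) ∈ P such that Φ_P(ξ_p(P)) = max_{ξ∈P} Φ_P(ξ), where Φ_P(ξ) = Σ_{k=1}^N α_k (h(P,u_k) − ξ·u_k)^p; moreover, this maximizer ξ_p(P) lies in the interior of P. -/
/-!
`Φ_P` is continuous, so it attains its maximum on the compact set `P`. Since the `u_k` are not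
concentrated on a closed hemisphere, `ξ ↦ (ξ · u_k)_k` is injective, so the strict concavity of
`s ↦ s ^ p` makes `Φ_P` strictly concave and the maximizer unique. At a boundary point `ξ` some
slack `h(P, u_k) - ξ · u_k` vanishes; moving a distance `t` towards an interior point raises that
term by order `t ^ p` while the other terms lose at most order `t`, and `t = o(t ^ p)` as `p < 1`.
-/

open MeasureTheory Set
open scoped RealInnerProductSpace

noncomputable section

/-- A polytope: convex hull of finitely many points with positive volume. -/
def IsPolytope {n : ℕ} (P : Set (EuclideanSpace ℝ (Fin n))) : Prop :=
  ∃ S : Finset (EuclideanSpace ℝ (Fin n)),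
    P = convexHull ℝ (S : Set (EuclideanSpace ℝ (Fin n))) ∧ 0 < volume P

/-- Support function of a set. -/
def suppF {n : ℕ} (P : Set (EuclideanSpace ℝ (Fin n))) (u : EuclideanSpace ℝ (Fin n)) : ℝ :=
  sSup ((fun x => ⟪x, u⟫) '' P)

/-- Support set F(P,u). -/
def suppSet {n : ℕ} (P : Set (EuclideanSpace ℝ (Fin n))) (u : EuclideanSpace ℝ (Fin n)) :
    Set (EuclideanSpace ℝ (Fin n)) :=
  {x ∈ P | ⟪x, u⟫ = suppF P u}

/-- (n-1)-dimensional Hausdorff measure of the support set F(P,u), as a real number. -/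
def facetArea {n : ℕ} (P : Set (EuclideanSpace ℝ (Fin n))) (u : EuclideanSpace ℝ (Fin n)) : ℝ :=
  (MeasureTheory.Measure.hausdorffMeasure ((n : ℝ) - 1) (suppSet P u)).toReal

/-- The unit vectors u 1, ..., u N are not concentrated on a closed hemisphere. -/
def NotOnClosedHemisphere {n N : ℕ} (u : Fin N → EuclideanSpace ℝ (Fin n)) : Prop :=
  ¬ ∃ v : EuclideanSpace ℝ (Fin n), ‖v‖ = 1 ∧ ∀ i, 0 ≤ ⟪u i, v⟫

/-- Membership in the class P(u₁,...,u_N). -/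
def InPolyClass {n N : ℕ} (u : Fin N → EuclideanSpace ℝ (Fin n))
    (P : Set (EuclideanSpace ℝ (Fin n))) : Prop :=
  IsPolytope P ∧ P = ⋂ k, {x | ⟪x, u k⟫ ≤ suppF P (u k)}

/-- The functional Φ_P(ξ) = Σ α_k (h(P,u_k) - ξ·u_k)^p. -/
def Phi {n N : ℕ} (α : Fin N → ℝ) (u : Fin N → EuclideanSpace ℝ (Fin n)) (p : ℝ)
    (P : Set (EuclideanSpace ℝ (Fin n))) (ξ : EuclideanSpace ℝ (Fin n)) : ℝ :=
  ∑ k, α k * (suppF P (u k) - ⟪ξ, u k⟫) ^ p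

theorem exists_mul_lt_mul_rpow {p : ℝ} (hp1 : p < 1) {A : ℝ} (hA : 0 < A) (B : ℝ) :
    ∃ t ∈ Ioo (0 : ℝ) 1, B * t < A * t ^ p := by
  have hpow : Filter.Tendsto (fun t : ℝ => B * t ^ (1 - p)) (nhdsWithin 0 (Ioi 0)) (nhds 0) := by
    have h := ((Real.continuousAt_rpow_const 0 (1 - p) (Or.inr (by linarith))).tendsto.const_mul B)
    rw [Real.zero_rpow (by linarith), mul_zero] at h
    exact h.mono_left nhdsWithin_le_nhds
  obtain ⟨t, ⟨hBt, ht1⟩, ht0⟩ := ((hpow.eventually (eventually_lt_nhds hA)).and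
    (nhdsWithin_le_nhds (eventually_lt_nhds one_pos))).and self_mem_nhdsWithin |>.exists
  refine ⟨t, ⟨ht0, ht1⟩, ?_⟩
  have htp : 0 < t ^ p := Real.rpow_pos_of_pos ht0 p
  calc B * t = B * t ^ (1 - p) * t ^ p := by
        rw [mul_assoc, ← Real.rpow_add ht0, sub_add_cancel, Real.rpow_one]
    _ < A * t ^ p := mul_lt_mul_of_pos_right hBt htp

theorem one_sub_mul_rpow_le_rpow {p : ℝ} (hp0 : 0 ≤ p) (hp1 : p ≤ 1) {d c t : ℝ} (hd : 0 ≤ d)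
    (hc : 0 ≤ c) (ht0 : 0 ≤ t) (ht1 : t ≤ 1) :
    (1 - t) * d ^ p ≤ ((1 - t) * d + t * c) ^ p := by
  have h1t : 0 ≤ 1 - t := by linarith
  calc (1 - t) * d ^ p ≤ (1 - t) ^ p * d ^ p :=
        mul_le_mul_of_nonneg_right (Real.self_le_rpow_of_le_one h1t (by linarith) hp1)
          (Real.rpow_nonneg hd p)
    _ = ((1 - t) * d) ^ p := (Real.mul_rpow h1t hd).symm
    _ ≤ ((1 - t) * d + t * c) ^ p :=
        Real.rpow_le_rpow (mul_nonneg h1t hd) (le_add_of_nonneg_right (mul_nonneg ht0 hc)) hp0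

section SlackPowSum

variable {E ι : Type*} [NormedAddCommGroup E] [InnerProductSpace ℝ E] [Fintype ι]

/-- `Phi` with the support numbers `h(P, u_k)` replaced by arbitrary right-hand sides `b k`. -/
def slackPowSum (α : ι → ℝ) (u : ι → E) (b : ι → ℝ) (p : ℝ) (ξ : E) : ℝ :=
  ∑ k, α k * (b k - ⟪ξ, u k⟫) ^ p

theorem continuous_slackPowSum (α : ι → ℝ) (u : ι → E) (b : ι → ℝ) {p : ℝ} (hp : 0 ≤ p) :
    Continuous (slackPowSum α u b p) :=
  continuous_finsetSum _ fun _ _ => continuous_const.mul <|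
    (continuous_const.sub (continuous_id.inner continuous_const)).rpow_const fun _ => Or.inr hp

theorem strictConcaveOn_slackPowSum {S : Set E} (hS : Convex ℝ S) {p : ℝ} (hp0 : 0 < p)
    (hp1 : p < 1) {α : ι → ℝ} (hα : ∀ k, 0 < α k) {u : ι → E} {b : ι → ℝ}
    (hSb : ∀ x ∈ S, ∀ k, ⟪x, u k⟫ ≤ b k) (hu : ∀ v, (∀ k, ⟪v, u k⟫ = 0) → v = 0) :
    StrictConcaveOn ℝ S (slackPowSum α u b p) := by
  refine ⟨hS, fun x hx y hy hxy s t hs ht hst => ?_⟩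
  obtain ⟨k₀, hk₀⟩ : ∃ k, ⟪x, u k⟫ ≠ ⟪y, u k⟫ := by
    by_contra! h
    exact hxy (sub_eq_zero.1 (hu _ fun k => by rw [inner_sub_left, h k, sub_self]))
  have hslack : ∀ k, b k - ⟪s • x + t • y, u k⟫
      = s • (b k - ⟪x, u k⟫) + t • (b k - ⟪y, u k⟫) := fun k => by
    simp only [inner_add_left, real_inner_smul_left, smul_eq_mul]
    linear_combination (-b k) * hst
  have hx' : ∀ k, b k - ⟪x, u k⟫ ∈ Ici 0 := fun k => sub_nonneg.2 (hSb x hx k)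
  have hy' : ∀ k, b k - ⟪y, u k⟫ ∈ Ici 0 := fun k => sub_nonneg.2 (hSb y hy k)
  have hrpow := Real.strictConcaveOn_rpow hp0 hp1
  simp only [slackPowSum, smul_eq_mul, Finset.mul_sum, ← Finset.sum_add_distrib, hslack]
  refine Finset.sum_lt_sum (fun k _ => ?_) ⟨k₀, Finset.mem_univ _, ?_⟩
  · have h := hrpow.concaveOn.2 (hx' k) (hy' k) hs.le ht.le hst
    simp only [smul_eq_mul] at h ⊢
    nlinarith [hα k]
  · have h := hrpow.2 (hx' k₀) (hy' k₀) (by simpa using hk₀) hs ht hst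
    simp only [smul_eq_mul] at h ⊢
    nlinarith [hα k₀]

theorem exists_slackPowSum_lt_of_inner_eq {p : ℝ} (hp0 : 0 < p) (hp1 : p < 1) {α : ι → ℝ}
    (hα : ∀ k, 0 < α k) {u : ι → E} {b : ι → ℝ} {ξ z : E} (hξ : ∀ k, ⟪ξ, u k⟫ ≤ b k) {k₀ : ι}
    (hk₀ : ⟪ξ, u k₀⟫ = b k₀) (hz : ∀ k, ⟪z, u k⟫ < b k) :
    ∃ t ∈ Ioo (0 : ℝ) 1, slackPowSum α u b p ξ < slackPowSum α u b p ((1 - t) • ξ + t • z) := by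
  set f := slackPowSum α u b p
  set A := α k₀ * (b k₀ - ⟪z, u k₀⟫) ^ p
  have hA : 0 < A := mul_pos (hα k₀) (Real.rpow_pos_of_pos (sub_pos.2 (hz k₀)) p)
  obtain ⟨t, ⟨ht0, ht1⟩, hBt⟩ := exists_mul_lt_mul_rpow hp1 hA (f ξ)
  have hslack : ∀ k, b k - ⟪(1 - t) • ξ + t • z, u k⟫
      = (1 - t) * (b k - ⟪ξ, u k⟫) + t * (b k - ⟪z, u k⟫) := fun k => by
    simp only [inner_add_left, real_inner_smul_left]
    ring
  -- every term keeps at least the fraction `1 - t` of its value; the active one gains `t ^ p * A`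
  have hgain : (1 - t) * f ξ + t ^ p * A ≤ f ((1 - t) • ξ + t • z) := by
    set g : ι → ℝ := fun k =>
      α k * ((b k - ⟪(1 - t) • ξ + t • z, u k⟫) ^ p - (1 - t) * (b k - ⟪ξ, u k⟫) ^ p)
    have hg : ∀ k, 0 ≤ g k := fun k => mul_nonneg (hα k).le <| sub_nonneg.2 <| by
      rw [hslack]
      exact one_sub_mul_rpow_le_rpow hp0.le hp1.le (sub_nonneg.2 (hξ k))
        (sub_nonneg.2 (hz k).le) ht0.le ht1.le
    have hgk₀ : g k₀ = t ^ p * A := by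
      simp only [g, A, hslack, hk₀, sub_self, mul_zero, zero_add,
        Real.zero_rpow hp0.ne', Real.mul_rpow ht0.le (sub_nonneg.2 (hz k₀).le)]
      ring
    have hsum : ∑ k, g k = f ((1 - t) • ξ + t • z) - (1 - t) * f ξ := by
      simp only [g, f, slackPowSum, mul_sub, Finset.sum_sub_distrib, Finset.mul_sum]
      congr 1
      exact Finset.sum_congr rfl fun k _ => by ring
    linarith [hgk₀ ▸ Finset.single_le_sum (fun k _ => hg k) (Finset.mem_univ k₀)]
  exact ⟨t, ⟨ht0, ht1⟩, by linarith⟩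

theorem interior_setOf_inner_le {u : E} (hu : u ≠ 0) (b : ℝ) :
    interior {x : E | ⟪x, u⟫ ≤ b} = {x | ⟪x, u⟫ < b} := by
  have hf : innerSL ℝ u ≠ 0 := fun h => hu (by simpa using congrArg (fun f => f u) h)
  calc interior {x : E | ⟪x, u⟫ ≤ b} = interior (innerSL ℝ u ⁻¹' Iic b) := by
        simp only [preimage, innerSL_apply_apply, real_inner_comm u, mem_Iic]
    _ = innerSL ℝ u ⁻¹' Iio b := by
        rw [← interior_Iic, ((innerSL ℝ u).isOpenMap_of_ne_zero hf)
          |>.preimage_interior_eq_interior_preimage (innerSL ℝ u).continuous]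
    _ = {x | ⟪x, u⟫ < b} := by
        simp only [preimage, innerSL_apply_apply, real_inner_comm u, mem_Iio]

theorem interior_iInter_setOf_inner_le {u : ι → E} (hu : ∀ k, u k ≠ 0) (b : ι → ℝ) :
    interior (⋂ k, {x : E | ⟪x, u k⟫ ≤ b k}) = ⋂ k, {x | ⟪x, u k⟫ < b k} := by
  simp only [interior_iInter_of_finite, interior_setOf_inner_le (hu _)]

theorem mem_interior_of_isMaxOn_slackPowSum {p : ℝ} (hp0 : 0 < p) (hp1 : p < 1) {α : ι → ℝ}
    (hα : ∀ k, 0 < α k) {u : ι → E} (hu : ∀ k, u k ≠ 0) {b : ι → ℝ} {P : Set E}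
    (hP : P = ⋂ k, {x | ⟪x, u k⟫ ≤ b k}) (hint : (interior P).Nonempty) {ξ : E} (hξ : ξ ∈ P)
    (hmax : IsMaxOn (slackPowSum α u b p) P ξ) : ξ ∈ interior P := by
  have hconv : Convex ℝ P := hP ▸ convex_iInter fun k =>
    convex_halfSpace_le ((innerₛₗ ℝ).flip (u k)).isLinear (b k)
  obtain ⟨z, hz⟩ := hint
  have hzP : z ∈ P := interior_subset hz
  have hξb : ∀ k, ⟪ξ, u k⟫ ≤ b k := by simpa [hP] using hξ
  rw [hP, interior_iInter_setOf_inner_le hu] at hz ⊢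
  simp only [mem_iInter, mem_ofPred_eq] at hz ⊢
  by_contra! ⟨k₀, hk₀⟩
  obtain ⟨t, ⟨ht0, ht1⟩, hlt⟩ := exists_slackPowSum_lt_of_inner_eq hp0 hp1 hα hξb
    (le_antisymm (hξb k₀) hk₀) hz
  exact (hmax (hconv hξ hzP (by linarith) ht0.le (by ring))).not_gt hlt

end SlackPowSum

theorem Convex.interior_nonempty_of_measure_ne_zero {E : Type*} [NormedAddCommGroup E]
    [NormedSpace ℝ E] [MeasurableSpace E] [BorelSpace E] [FiniteDimensional ℝ E]
    {s : Set E} (hs : Convex ℝ s) (μ : Measure E) [μ.IsAddHaarMeasure] (h : μ s ≠ 0) :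
    (interior s).Nonempty := by
  by_contra hempty
  have hfrontier : s ⊆ frontier s := by
    rw [frontier, not_nonempty_iff_eq_empty.1 hempty, sdiff_empty]
    exact subset_closure
  exact h (measure_mono_null hfrontier (hs.addHaar_frontier μ))

theorem NotOnClosedHemisphere.eq_zero_of_forall_inner_eq_zero {n N : ℕ}
    {u : Fin N → EuclideanSpace ℝ (Fin n)} (hu : NotOnClosedHemisphere u)
    (v : EuclideanSpace ℝ (Fin n)) (hv : ∀ k, ⟪v, u k⟫ = 0) : v = 0 := by
  by_contra hv0
  unfold NotOnClosedHemisphere at hu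
  refine hu ⟨(‖v‖⁻¹ : ℝ) • v, norm_smul_inv_norm hv0, fun k => ?_⟩
  rw [real_inner_smul_right, real_inner_comm, hv k, mul_zero]

theorem Phi_exists_unique_maximizer_general
    {n N : ℕ}
    (p : ℝ) (hp0 : 0 < p) (hp1 : p < 1)
    (α : Fin N → ℝ) (hα : ∀ k, 0 < α k)
    (u : Fin N → EuclideanSpace ℝ (Fin n)) (hu : ∀ k, ‖u k‖ = 1)
    (hhem : NotOnClosedHemisphere u)
    (P : Set (EuclideanSpace ℝ (Fin n))) (hP : InPolyClass u P) :
    ∃ ξ₀ : EuclideanSpace ℝ (Fin n),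
      ξ₀ ∈ interior P ∧ IsMaxOn (Phi α u p P) P ξ₀ ∧
      ∀ ξ ∈ P, IsMaxOn (Phi α u p P) P ξ → ξ = ξ₀ := by
  obtain ⟨⟨S, hSP, hvol⟩, hPcap⟩ := hP
  have hconv : Convex ℝ P := hSP ▸ convex_convexHull ℝ _
  have hcomp : IsCompact P := hSP ▸ S.finite_toSet.isCompact_convexHull ℝ
  have hPb : ∀ x ∈ P, ∀ k, ⟪x, u k⟫ ≤ suppF P (u k) := fun x hx => by
    rw [hPcap] at hx
    simpa using hx
  obtain ⟨ξ₀, hξ₀, hmax⟩ := hcomp.exists_isMaxOn (nonempty_of_measure_ne_zero hvol.ne')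
    (continuous_slackPowSum α u _ hp0.le).continuousOn
  have hconc : StrictConcaveOn ℝ P (Phi α u p P) :=
    strictConcaveOn_slackPowSum hconv hp0 hp1 hα hPb hhem.eq_zero_of_forall_inner_eq_zero
  have hu0 : ∀ k, u k ≠ 0 := fun k => ne_zero_of_norm_ne_zero (by rw [hu k]; exact one_ne_zero)
  exact ⟨ξ₀, mem_interior_of_isMaxOn_slackPowSum hp0 hp1 hα hu0 hPcap
    (hconv.interior_nonempty_of_measure_ne_zero volume hvol.ne') hξ₀ hmax, hmax,
    fun ξ hξ hξmax => hconc.eq_of_isMaxOn hξmax hmax hξ hξ₀⟩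

/-- Φ_P has a unique maximizer on P, lying in the interior of P (Lemma 3.2). -/
theorem Phi_exists_unique_maximizer
    {n N : ℕ} (hn : 2 ≤ n) (hN : n + 1 ≤ N)
    (p : ℝ) (hp0 : 0 < p) (hp1 : p < 1)
    (α : Fin N → ℝ) (hα : ∀ k, 0 < α k)
    (u : Fin N → EuclideanSpace ℝ (Fin n)) (hu : ∀ k, ‖u k‖ = 1)
    (hhem : NotOnClosedHemisphere u)
    (P : Set (EuclideanSpace ℝ (Fin n))) (hP : InPolyClass u P) :
    ∃ ξ₀ : EuclideanSpace ℝ (Fin n),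
      ξ₀ ∈ interior P ∧ IsMaxOn (Phi α u p P) P ξ₀ ∧
      ∀ ξ ∈ P, IsMaxOn (Phi α u p P) P ξ → ξ = ξ₀ :=
  Phi_exists_unique_maximizer_general p hp0 hp1 α hα u hu hhem P hP
end
end

section
/- Let 0 < p < 1, let α_1,…,α_N be positive real numbers, and let u_1,…,u_N (N ≥ n+1) be unit vectors in ℝ^n not concentrated on a closed hemisphere. Suppose P_i ∈ P(u_1,…,u_N) is a sequence of polytopes converging in Hausdorff distance to a polytope P (so that P ∈ P(u_1,…,u_N)). Then ξ_p(P_i) → ξ_p(P) and Φ_{P_i}(ξ_p(P_i)) → Φ_P(ξ_p(P)) as i → ∞. -/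
/-
The functional Φ_P depends on P only through the support numbers h(P, u_k), which are
Lipschitz in P for the Hausdorff distance; hence Φ_{P_i}(ζ_i) → Φ_P(z) whenever ζ_i → z.
Since the u_k are not concentrated on a closed hemisphere, ξ ↦ (ξ · u_k)_k is injective, so the
strict concavity of t ↦ t^p makes Φ_P strictly concave on P and its maximizer unique.
The maximizers ξ_i eventually lie in a compact neighbourhood of P, and every cluster point of
them lies in P and maximizes Φ_P (compare with points of P_i approaching a competitor in P),
so it is ξ_p(P).
-/

open MeasureTheory Set
open scoped RealInnerProductSpace

noncomputable section

open Filter Topology Metric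

section HausdorffConvergence

variable {X ι : Type*} [MetricSpace X]

lemma exists_dist_le_hausdorffDist {s t : Set X} {x : X} (hx : x ∈ s) (hs : Bornology.IsBounded s)
    (ht : IsCompact t) (htne : t.Nonempty) : ∃ y ∈ t, dist x y ≤ hausdorffDist s t := by
  obtain ⟨y, hy, hxy⟩ := ht.exists_infDist_eq_dist htne x
  refine ⟨y, hy, hxy ▸ infDist_le_hausdorffDist_of_mem hx ?_⟩
  exact hausdorffEDist_ne_top_of_nonempty_of_bounded ⟨x, hx⟩ htne hs ht.isBounded

variable {L : Filter ι} {s : ι → Set X} {t : Set X}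

lemma mem_of_tendsto_of_tendsto_hausdorffDist [L.NeBot] (hs : ∀ i, Bornology.IsBounded (s i))
    (ht : IsCompact t) (htne : t.Nonempty)
    (hconv : Tendsto (fun i => hausdorffDist (s i) t) L (𝓝 0))
    {x : ι → X} (hx : ∀ i, x i ∈ s i) {y : X} (hlim : Tendsto x L (𝓝 y)) : y ∈ t := by
  have hinf : infDist y t ≤ 0 :=
    le_of_tendsto_of_tendsto' (((continuous_infDist_pt t).tendsto y).comp hlim) hconv fun i =>
      infDist_le_hausdorffDist_of_mem (hx i) <|
        hausdorffEDist_ne_top_of_nonempty_of_bounded ⟨x i, hx i⟩ htne (hs i) ht.isBounded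
  exact (ht.isClosed.mem_iff_infDist_zero htne).2 (le_antisymm hinf infDist_nonneg)

lemma exists_tendsto_of_tendsto_hausdorffDist (hs : ∀ i, IsCompact (s i))
    (hsne : ∀ i, (s i).Nonempty) (ht : Bornology.IsBounded t)
    (hconv : Tendsto (fun i => hausdorffDist (s i) t) L (𝓝 0)) {y : X} (hy : y ∈ t) :
    ∃ z : ι → X, (∀ i, z i ∈ s i) ∧ Tendsto z L (𝓝 y) := by
  choose z hz hzy using fun i => exists_dist_le_hausdorffDist hy ht (hs i) (hsne i)
  refine ⟨z, hz, tendsto_iff_dist_tendsto_zero.2 <| squeeze_zero (fun _ => dist_nonneg)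
    (fun i => ?_) hconv⟩
  rw [dist_comm, hausdorffDist_comm]
  exact hzy i

lemma eventually_mem_cthickening_of_tendsto_hausdorffDist (hs : ∀ i, Bornology.IsBounded (s i))
    (ht : IsCompact t) (htne : t.Nonempty)
    (hconv : Tendsto (fun i => hausdorffDist (s i) t) L (𝓝 0))
    {x : ι → X} (hx : ∀ i, x i ∈ s i) {δ : ℝ} (hδ : 0 < δ) : ∀ᶠ i in L, x i ∈ cthickening δ t := by
  filter_upwards [hconv.eventually (gt_mem_nhds hδ)] with i hi
  obtain ⟨y, hy, hxy⟩ := exists_dist_le_hausdorffDist (hx i) (hs i) ht htne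
  exact mem_cthickening_of_dist_le _ y δ t hy (hxy.trans hi.le)

/-- A form of Berge's maximum theorem. -/
theorem tendsto_isMaxOn_of_tendsto_hausdorffDist [ProperSpace X] (hs : ∀ i, IsCompact (s i))
    (hsne : ∀ i, (s i).Nonempty) (ht : IsCompact t) (htne : t.Nonempty)
    (hconv : Tendsto (fun i => hausdorffDist (s i) t) L (𝓝 0))
    {F : ι → X → ℝ} {G : X → ℝ} (hF : ∀ z, Tendsto (Function.uncurry F) (L ×ˢ 𝓝 z) (𝓝 (G z)))
    {ξ : ι → X} (hξ : ∀ i, ξ i ∈ s i) (hξmax : ∀ i, IsMaxOn (F i) (s i) (ξ i))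
    {ξ₀ : X} (huniq : ∀ η ∈ t, IsMaxOn G t η → η = ξ₀) :
    Tendsto ξ L (𝓝 ξ₀) ∧ Tendsto (fun i => F i (ξ i)) L (𝓝 (G ξ₀)) := by
  have hsb : ∀ i, Bornology.IsBounded (s i) := fun i => (hs i).isBounded
  have hlim : Tendsto ξ L (𝓝 ξ₀) := by
    refine ht.cthickening.tendsto_nhds_of_unique_mapClusterPt
      (eventually_mem_cthickening_of_tendsto_hausdorffDist hsb ht htne hconv hξ one_pos)
      fun η _ hη => ?_
    obtain ⟨U, hUL, hξη⟩ := mapClusterPt_iff_ultrafilter.1 hη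
    have hUL' : Tendsto id (U : Filter ι) L := tendsto_id'.2 hUL
    refine huniq η (mem_of_tendsto_of_tendsto_hausdorffDist hsb ht htne
      (hconv.mono_left hUL) hξ hξη) fun y hy => ?_
    obtain ⟨z, hz, hzy⟩ := exists_tendsto_of_tendsto_hausdorffDist hs hsne ht.isBounded hconv hy
    exact le_of_tendsto_of_tendsto' ((hF y).comp (hUL'.prodMk (hzy.mono_left hUL)))
      ((hF η).comp (hUL'.prodMk hξη)) fun i => hξmax i (hz i)
  exact ⟨hlim, (hF ξ₀).comp (tendsto_id.prodMk hlim)⟩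

end HausdorffConvergence

lemma IsPolytope.isCompact {n : ℕ} {P : Set (EuclideanSpace ℝ (Fin n))} (h : IsPolytope P) :
    IsCompact P := by
  obtain ⟨S, rfl, -⟩ := h
  exact S.finite_toSet.isCompact_convexHull ℝ

lemma IsPolytope.convex {n : ℕ} {P : Set (EuclideanSpace ℝ (Fin n))} (h : IsPolytope P) :
    Convex ℝ P := by
  obtain ⟨S, rfl, -⟩ := h
  exact convex_convexHull ℝ _

lemma IsPolytope.nonempty {n : ℕ} {P : Set (EuclideanSpace ℝ (Fin n))} (h : IsPolytope P) :
    P.Nonempty := by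
  obtain ⟨S, -, hvol⟩ := h
  exact nonempty_of_measure_ne_zero hvol.ne'

section SupportFunction

variable {n : ℕ}

lemma inner_le_suppF {P : Set (EuclideanSpace ℝ (Fin n))} (hP : IsCompact P)
    {x : EuclideanSpace ℝ (Fin n)} (hx : x ∈ P) (u : EuclideanSpace ℝ (Fin n)) :
    ⟪x, u⟫ ≤ suppF P u :=
  le_csSup (hP.image (continuous_id.inner continuous_const)).bddAbove (mem_image_of_mem _ hx)

lemma suppF_le_suppF_add {P Q : Set (EuclideanSpace ℝ (Fin n))} (hP : Bornology.IsBounded P)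
    (hPne : P.Nonempty) (hQ : IsCompact Q) (hQne : Q.Nonempty) (u : EuclideanSpace ℝ (Fin n)) :
    suppF P u ≤ suppF Q u + ‖u‖ * hausdorffDist P Q := by
  refine csSup_le (hPne.image _) ?_
  rintro _ ⟨x, hx, rfl⟩
  obtain ⟨y, hy, hxy⟩ := exists_dist_le_hausdorffDist hx hP hQ hQne
  calc ⟪x, u⟫ = ⟪y, u⟫ + ⟪x - y, u⟫ := by rw [inner_sub_left]; ring
    _ ≤ suppF Q u + ‖x - y‖ * ‖u‖ := add_le_add (inner_le_suppF hQ hy u) (real_inner_le_norm _ _)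
    _ ≤ suppF Q u + ‖u‖ * hausdorffDist P Q := by rw [← dist_eq_norm, mul_comm]; gcongr

lemma abs_suppF_sub_suppF_le {P Q : Set (EuclideanSpace ℝ (Fin n))} (hP : IsCompact P)
    (hPne : P.Nonempty) (hQ : IsCompact Q) (hQne : Q.Nonempty) (u : EuclideanSpace ℝ (Fin n)) :
    |suppF P u - suppF Q u| ≤ ‖u‖ * hausdorffDist P Q := by
  rw [abs_sub_le_iff]
  constructor
  · linarith [suppF_le_suppF_add hP.isBounded hPne hQ hQne u]
  · rw [hausdorffDist_comm]
    linarith [suppF_le_suppF_add hQ.isBounded hQne hP hPne u]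

lemma tendsto_suppF_of_tendsto_hausdorffDist {ι : Type*} {L : Filter ι}
    {P : ι → Set (EuclideanSpace ℝ (Fin n))} {P₀ : Set (EuclideanSpace ℝ (Fin n))}
    (hP : ∀ i, IsCompact (P i)) (hPne : ∀ i, (P i).Nonempty) (hP₀ : IsCompact P₀)
    (hP₀ne : P₀.Nonempty) (hconv : Tendsto (fun i => hausdorffDist (P i) P₀) L (𝓝 0))
    (u : EuclideanSpace ℝ (Fin n)) :
    Tendsto (fun i => suppF (P i) u) L (𝓝 (suppF P₀ u)) := by
  have hbound := hconv.const_mul ‖u‖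
  rw [mul_zero] at hbound
  refine tendsto_iff_dist_tendsto_zero.2 <| squeeze_zero (fun _ => dist_nonneg) (fun i => ?_) hbound
  rw [Real.dist_eq]
  exact abs_suppF_sub_suppF_le (hP i) (hPne i) hP₀ hP₀ne u

end SupportFunction

section Phi

variable {n N : ℕ} {α : Fin N → ℝ} {u : Fin N → EuclideanSpace ℝ (Fin n)} {p : ℝ}

lemma tendsto_uncurry_Phi {ι : Type*} {L : Filter ι} (hp : 0 ≤ p)
    {P : ι → Set (EuclideanSpace ℝ (Fin n))} {P₀ : Set (EuclideanSpace ℝ (Fin n))}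
    (hsupp : ∀ k, Tendsto (fun i => suppF (P i) (u k)) L (𝓝 (suppF P₀ (u k))))
    (z : EuclideanSpace ℝ (Fin n)) :
    Tendsto (Function.uncurry fun i => Phi α u p (P i)) (L ×ˢ 𝓝 z) (𝓝 (Phi α u p P₀ z)) := by
  refine tendsto_finsetSum _ fun k _ =>
    ((((hsupp k).comp tendsto_fst).sub ?_).rpow_const (Or.inr hp)).const_mul (α k)
  exact ((continuous_id.inner continuous_const).tendsto z).comp tendsto_snd

lemma NotOnClosedHemisphere.eq_of_forall_inner_eq (hu : NotOnClosedHemisphere u)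
    {x y : EuclideanSpace ℝ (Fin n)} (h : ∀ k, ⟪x, u k⟫ = ⟪y, u k⟫) : x = y := by
  by_contra hxy
  refine hu ⟨‖x - y‖⁻¹ • (x - y), norm_smul_inv_norm (sub_ne_zero.2 hxy), fun k => ?_⟩
  rw [real_inner_smul_right, inner_sub_right, real_inner_comm x, real_inner_comm y, h k,
    sub_self, mul_zero]

lemma strictConcaveOn_Phi (hα : ∀ k, 0 < α k) (hu : NotOnClosedHemisphere u) (hp0 : 0 < p)
    (hp1 : p < 1) {K : Set (EuclideanSpace ℝ (Fin n))} (hK : IsCompact K) (hKc : Convex ℝ K) :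
    StrictConcaveOn ℝ K (Phi α u p K) := by
  refine ⟨hKc, fun x hx y hy hxy a b ha hb hab => ?_⟩
  have hA : ∀ z ∈ K, ∀ k, 0 ≤ suppF K (u k) - ⟪z, u k⟫ := fun z hz k =>
    sub_nonneg.2 (inner_le_suppF hK hz _)
  have hcomb : ∀ k, suppF K (u k) - ⟪a • x + b • y, u k⟫ =
      a * (suppF K (u k) - ⟪x, u k⟫) + b * (suppF K (u k) - ⟪y, u k⟫) := fun k => by
    rw [inner_add_left, real_inner_smul_left, real_inner_smul_left]
    linear_combination -suppF K (u k) * hab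
  obtain ⟨k₀, hk₀⟩ : ∃ k, suppF K (u k) - ⟪x, u k⟫ ≠ suppF K (u k) - ⟪y, u k⟫ := by
    by_contra! h
    exact hxy (hu.eq_of_forall_inner_eq fun k => by linarith [h k])
  simp only [Phi, smul_eq_mul, Finset.mul_sum, ← Finset.sum_add_distrib, hcomb]
  refine Finset.sum_lt_sum (fun k _ => ?_) ⟨k₀, Finset.mem_univ _, ?_⟩
  · have := (Real.concaveOn_rpow hp0.le hp1.le).2 (hA x hx k) (hA y hy k) ha.le hb.le hab
    simp only [smul_eq_mul] at this
    nlinarith [hα k]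
  · have := (Real.strictConcaveOn_rpow hp0 hp1).2 (hA x hx k₀) (hA y hy k₀) hk₀ ha hb hab
    simp only [smul_eq_mul] at this
    nlinarith [hα k₀]

end Phi

theorem Phi_maximizer_continuous_general
    {n N : ℕ}
    (p : ℝ) (hp0 : 0 < p) (hp1 : p < 1)
    (α : Fin N → ℝ) (hα : ∀ k, 0 < α k)
    (u : Fin N → EuclideanSpace ℝ (Fin n))
    (hhem : NotOnClosedHemisphere u)
    (P : ℕ → Set (EuclideanSpace ℝ (Fin n))) (hP : ∀ i, InPolyClass u (P i))
    (P₀ : Set (EuclideanSpace ℝ (Fin n))) (hP₀ : InPolyClass u P₀)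
    (hconv : Filter.Tendsto (fun i => Metric.hausdorffDist (P i) P₀)
      Filter.atTop (nhds 0))
    (ξ : ℕ → EuclideanSpace ℝ (Fin n))
    (hξmem : ∀ i, ξ i ∈ P i) (hξmax : ∀ i, IsMaxOn (Phi α u p (P i)) (P i) (ξ i))
    (ξ₀ : EuclideanSpace ℝ (Fin n))
    (hξ₀mem : ξ₀ ∈ P₀) (hξ₀max : IsMaxOn (Phi α u p P₀) P₀ ξ₀) :
    Filter.Tendsto ξ Filter.atTop (nhds ξ₀) ∧
    Filter.Tendsto (fun i => Phi α u p (P i) (ξ i)) Filter.atTop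
      (nhds (Phi α u p P₀ ξ₀)) := by
  have hPc : ∀ i, IsCompact (P i) := fun i => (hP i).1.isCompact
  have hPne : ∀ i, (P i).Nonempty := fun i => (hP i).1.nonempty
  have hP₀c : IsCompact P₀ := hP₀.1.isCompact
  have hsupp := fun k =>
    tendsto_suppF_of_tendsto_hausdorffDist hPc hPne hP₀c hP₀.1.nonempty hconv (u k)
  have hstrict := strictConcaveOn_Phi hα hhem hp0 hp1 hP₀c hP₀.1.convex
  exact tendsto_isMaxOn_of_tendsto_hausdorffDist hPc hPne hP₀c hP₀.1.nonempty hconv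
    (tendsto_uncurry_Phi hp0.le hsupp) hξmem hξmax
    fun η hη hηmax => hstrict.eq_of_isMaxOn hηmax hξ₀max hη hξ₀mem

/-- Continuity of the maximizer ξ_p and of the maximal value of Φ under
Hausdorff convergence of polytopes (Lemma 3.3). -/
theorem Phi_maximizer_continuous
    {n N : ℕ} (hn : 2 ≤ n) (hN : n + 1 ≤ N)
    (p : ℝ) (hp0 : 0 < p) (hp1 : p < 1)
    (α : Fin N → ℝ) (hα : ∀ k, 0 < α k)
    (u : Fin N → EuclideanSpace ℝ (Fin n)) (hu : ∀ k, ‖u k‖ = 1)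
    (hhem : NotOnClosedHemisphere u)
    (P : ℕ → Set (EuclideanSpace ℝ (Fin n))) (hP : ∀ i, InPolyClass u (P i))
    (P₀ : Set (EuclideanSpace ℝ (Fin n))) (hP₀ : InPolyClass u P₀)
    (hconv : Filter.Tendsto (fun i => Metric.hausdorffDist (P i) P₀)
      Filter.atTop (nhds 0))
    (ξ : ℕ → EuclideanSpace ℝ (Fin n))
    (hξmem : ∀ i, ξ i ∈ P i) (hξmax : ∀ i, IsMaxOn (Phi α u p (P i)) (P i) (ξ i))
    (ξ₀ : EuclideanSpace ℝ (Fin n))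
    (hξ₀mem : ξ₀ ∈ P₀) (hξ₀max : IsMaxOn (Phi α u p P₀) P₀ ξ₀) :
    Filter.Tendsto ξ Filter.atTop (nhds ξ₀) ∧
    Filter.Tendsto (fun i => Phi α u p (P i) (ξ i)) Filter.atTop
      (nhds (Phi α u p P₀ ξ₀)) :=
  Phi_maximizer_continuous_general p hp0 hp1 α hα u hhem P hP P₀ hP₀ hconv ξ hξmem hξmax ξ₀ hξ₀mem
    hξ₀max
end
end
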